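/- Let f: ℝⁿ → ℝ be convex, x̄ ∈ ℝⁿ with f(x̄) = 0 and 0 ∉ ∂f(x̄), and let γ₁ < d(0, ∂f(x̄)). Then there exists ε > 0 such that for all x with ‖x - x̄‖ < ε, f(x) > 0, and d((x - x̄)/‖x - x̄‖, N_{f⁻¹((-∞,0])}(x̄)) < ε, one has f(x)/‖x - x̄‖ ≥ γ₁. -/

import Mathlib

open RealInnerProductSpace

/-- The convex subdifferential of `f` at `x`. -/
def subdiff {n : ℕ} (f : EuclideanSpace ℝ (Fin n) → ℝ) (x : EuclideanSpace ℝ (Fin n)) :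
    Set (EuclideanSpace ℝ (Fin n)) :=
  {y | ∀ z, f x + ⟪y, z - x⟫ ≤ f z}

/-- The normal cone of a convex set `C` at `x`. -/
def normalCone {n : ℕ} (C : Set (EuclideanSpace ℝ (Fin n))) (x : EuclideanSpace ℝ (Fin n)) :
    Set (EuclideanSpace ℝ (Fin n)) :=
  {v | ∀ y ∈ C, ⟪v, y - x⟫ ≤ 0}

/-! Every normal vector `w` to `{f ≤ 0}` at `x̄` is seen by a subgradient: `γ ‖w‖ ≤ ⟪z, w⟫` for
some `z ∈ ∂f(x̄)` whenever `0 ≤ γ < d(0, ∂f(x̄))`. To find `z`, tilt `w` away from the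
minimal-norm subgradient `z₀` to a direction `v = w - θ z₀` that still has `⟪w, v⟫ > 0`. Then
`f'(x̄; v) ≥ 0`, since otherwise `f` would become negative along `v`, inside the sublevel set,
contradicting the normality of `w`. The max formula, obtained from Hahn–Banach applied to the
sublinear map `f'(x̄; ·)`, gives `z ∈ ∂f(x̄)` with `⟪z, v⟫ = f'(x̄; v)`, and `⟪z₀, z⟫ ≥ ‖z₀‖²`
turns this into the bound on `⟪z, w⟫`.

If `x` is close to `x̄` and its unit direction `u` is within `ε` of such a `w`, then
`f x ≥ ⟪z, x - x̄⟫ = ‖x - x̄‖ ⟪z, u⟫`, and since `∂f(x̄)` is bounded, replacing `w` by `u` costs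
only `O(ε)`. -/

open Set
open scoped Pointwise

section DirDeriv

variable {E : Type*} [AddCommGroup E] [Module ℝ E] {f : E → ℝ} {x : E}

/-- For convex `f` the difference quotients decrease as `t ↓ 0`, so this infimum is the
one-sided directional derivative `f'(x; v)`. -/
noncomputable def dirDeriv (f : E → ℝ) (x v : E) : ℝ :=
  sInf (slope (fun t : ℝ => f (x + t • v)) 0 '' Ioi 0)

lemma ConvexOn.comp_line (hf : ConvexOn ℝ univ f) (x v : E) :
    ConvexOn ℝ univ (fun t : ℝ => f (x + t • v)) := by
  refine ⟨convex_univ, fun s _ t _ a b ha hb hab => ?_⟩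
  have hline : x + (a • s + b • t) • v = a • (x + s • v) + b • (x + t • v) := by
    linear_combination (norm := module) hab.symm • x
  simpa only [hline] using hf.2 (mem_univ _) (mem_univ _) ha hb hab

lemma ConvexOn.slope_line_mono (hf : ConvexOn ℝ univ f) (x v : E) :
    MonotoneOn (slope (fun t : ℝ => f (x + t • v)) 0) {0}ᶜ := by
  simpa only [← compl_eq_univ_sdiff] using (hf.comp_line x v).slope_mono (mem_univ 0)

lemma ConvexOn.bddBelow_slope_line (hf : ConvexOn ℝ univ f) (x v : E) :
    BddBelow (slope (fun t : ℝ => f (x + t • v)) 0 '' Ioi 0) :=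
  ⟨_, forall_mem_image.2 fun _ ht => hf.slope_line_mono x v (by norm_num) (ne_of_gt ht)
    ((neg_lt_zero.2 one_pos).trans ht).le⟩

lemma ConvexOn.dirDeriv_le_slope (hf : ConvexOn ℝ univ f) (x v : E) {t : ℝ} (ht : 0 < t) :
    dirDeriv f x v ≤ slope (fun t : ℝ => f (x + t • v)) 0 t :=
  csInf_le (hf.bddBelow_slope_line x v) (mem_image_of_mem _ ht)

lemma ConvexOn.dirDeriv_sub_le (hf : ConvexOn ℝ univ f) (x y : E) :
    dirDeriv f x (y - x) ≤ f y - f x := by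
  simpa [slope_def_field] using hf.dirDeriv_le_slope x (y - x) one_pos

lemma dirDeriv_smul (f : E → ℝ) (x v : E) {c : ℝ} (hc : 0 < c) :
    dirDeriv f x (c • v) = c * dirDeriv f x v := by
  have hset : slope (fun t : ℝ => f (x + t • c • v)) 0 '' Ioi 0
      = c • (slope (fun t : ℝ => f (x + t • v)) 0 '' Ioi 0) := by
    conv_rhs => rw [← image_smul, ← image_const_mul_Ioi_zero hc, image_image, image_image]
    refine image_congr fun t _ => ?_
    simp only [slope_def_field, smul_smul, smul_eq_mul, sub_zero, zero_mul, zero_smul, mul_comm t c]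
    field_simp
  rw [dirDeriv, hset, Real.sInf_smul_of_nonneg hc.le, smul_eq_mul, dirDeriv]

lemma dirDeriv_zero (f : E → ℝ) (x : E) : dirDeriv f x 0 = 0 := by
  have h := dirDeriv_smul f x 0 two_pos
  rw [smul_zero] at h
  linarith

lemma ConvexOn.dirDeriv_add_le (hf : ConvexOn ℝ univ f) (x u v : E) :
    dirDeriv f x (u + v) ≤ dirDeriv f x u + dirDeriv f x v := by
  have key : ∀ s t : ℝ, 0 < s → 0 < t → dirDeriv f x (u + v) ≤
      slope (fun t : ℝ => f (x + t • u)) 0 s + slope (fun t : ℝ => f (x + t • v)) 0 t := by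
    intro s t hs ht
    have hr : 0 < min s t := lt_min hs ht
    have hmid : f (x + (min s t / 2) • (u + v))
        ≤ 2⁻¹ * f (x + min s t • u) + 2⁻¹ * f (x + min s t • v) := by
      have h := hf.2 (mem_univ (x + min s t • u)) (mem_univ (x + min s t • v))
        (inv_nonneg.2 zero_le_two) (inv_nonneg.2 zero_le_two) (by norm_num)
      have hline : x + (min s t / 2) • (u + v)
          = (2⁻¹ : ℝ) • (x + min s t • u) + (2⁻¹ : ℝ) • (x + min s t • v) := by
        module
      simpa only [hline, smul_eq_mul] using h
    calc dirDeriv f x (u + v) ≤ slope (fun t : ℝ => f (x + t • (u + v))) 0 (min s t / 2) :=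
          hf.dirDeriv_le_slope x _ (half_pos hr)
      _ ≤ slope (fun t : ℝ => f (x + t • u)) 0 (min s t)
          + slope (fun t : ℝ => f (x + t • v)) 0 (min s t) := by
        simp only [slope_def_field, sub_zero, zero_smul, add_zero]
        rw [← add_div, div_le_div_iff₀ (half_pos hr) hr]
        nlinarith
      _ ≤ _ := add_le_add
          (hf.slope_line_mono x u hr.ne' hs.ne' (min_le_left s t))
          (hf.slope_line_mono x v hr.ne' ht.ne' (min_le_right s t))
  have hu : ∀ t : ℝ, 0 < t →
      dirDeriv f x (u + v) - slope (fun t : ℝ => f (x + t • v)) 0 t ≤ dirDeriv f x u :=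
    fun t ht => le_csInf (nonempty_Ioi.image _)
      (forall_mem_image.2 fun s hs => by linarith [key s t hs ht])
  have hv : dirDeriv f x (u + v) - dirDeriv f x u ≤ dirDeriv f x v :=
    le_csInf (nonempty_Ioi.image _) (forall_mem_image.2 fun t ht => by linarith [hu t ht])
  linarith

lemma ConvexOn.mul_dirDeriv_le (hf : ConvexOn ℝ univ f) (x v : E) (c : ℝ) :
    c * dirDeriv f x v ≤ dirDeriv f x (c • v) := by
  rcases lt_trichotomy c 0 with hc | rfl | hc
  · have h := hf.dirDeriv_add_le x v (-v)
    rw [add_neg_cancel, dirDeriv_zero] at h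
    rw [← neg_smul_neg, dirDeriv_smul f x (-v) (neg_pos.2 hc)]
    nlinarith
  · rw [zero_smul, dirDeriv_zero, zero_mul]
  · rw [dirDeriv_smul f x v hc]

lemma ConvexOn.exists_linearMap_le_dirDeriv (hf : ConvexOn ℝ univ f) (x v : E) :
    ∃ g : E →ₗ[ℝ] ℝ, g v = dirDeriv f x v ∧ ∀ u, g u ≤ dirDeriv f x u := by
  let g₀ : E →ₗ.[ℝ] ℝ := LinearPMap.mkSpanSingleton' v (dirDeriv f x v) fun c hcv => by
    rcases smul_eq_zero.1 hcv with rfl | rfl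
    · exact zero_smul ℝ _
    · rw [dirDeriv_zero, smul_zero]
  have hg₀ : ∀ u : g₀.domain, g₀ u ≤ dirDeriv f x u := by
    rintro ⟨_, hu⟩
    obtain ⟨c, rfl⟩ := Submodule.mem_span_singleton.1 hu
    rw [LinearPMap.mkSpanSingleton'_apply]
    exact hf.mul_dirDeriv_le x v c
  obtain ⟨g, hg, hle⟩ := exists_extension_of_le_sublinear g₀ (dirDeriv f x)
    (fun c hc u => dirDeriv_smul f x u hc) (hf.dirDeriv_add_le x) hg₀
  refine ⟨g, ?_, hle⟩
  calc g v = g ((1 : ℝ) • v) := by rw [one_smul]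
    _ = g₀ ⟨(1 : ℝ) • v, _⟩ := hg ⟨_, Submodule.mem_span_singleton.2 ⟨1, rfl⟩⟩
    _ = dirDeriv f x v := (LinearPMap.mkSpanSingleton'_apply _ _ _ 1 _).trans (one_smul ℝ _)

end DirDeriv

lemma exists_norm_eq_infDist_and_norm_sq_le_inner {F : Type*} [NormedAddCommGroup F] [InnerProductSpace ℝ F]
    {K : Set F} (hne : K.Nonempty) (hK : IsComplete K) (hconv : Convex ℝ K) :
    ∃ z₀ ∈ K, ‖z₀‖ = Metric.infDist 0 K ∧ ∀ z ∈ K, ‖z₀‖ ^ 2 ≤ ⟪z₀, z⟫ := by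
  obtain ⟨z₀, hz₀, hmin⟩ := exists_norm_eq_iInf_of_complete_convex hne hK hconv 0
  refine ⟨z₀, hz₀, ?_, fun z hz => ?_⟩
  · rw [Metric.infDist_eq_iInf]
    simpa only [zero_sub, norm_neg, dist_zero_left] using hmin
  · have h := (norm_eq_iInf_iff_real_inner_le_zero hconv hz₀).1 hmin z hz
    rw [zero_sub, inner_neg_left, inner_sub_right, real_inner_self_eq_norm_sq] at h
    linarith

section Euclidean

variable {n : ℕ} {f : EuclideanSpace ℝ (Fin n) → ℝ} {x : EuclideanSpace ℝ (Fin n)}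

lemma isClosed_subdiff (f : EuclideanSpace ℝ (Fin n) → ℝ) (x : EuclideanSpace ℝ (Fin n)) :
    IsClosed (subdiff f x) := by
  simp only [subdiff, ofPred_forall]
  exact isClosed_iInter fun z => isClosed_le (by fun_prop) continuous_const

lemma convex_subdiff (f : EuclideanSpace ℝ (Fin n) → ℝ) (x : EuclideanSpace ℝ (Fin n)) :
    Convex ℝ (subdiff f x) := by
  intro y₁ h₁ y₂ h₂ a b ha hb hab z
  rw [inner_add_left, real_inner_smul_left, real_inner_smul_left]
  linear_combination mul_le_mul_of_nonneg_left (h₁ z) ha + mul_le_mul_of_nonneg_left (h₂ z) hb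
    + (f z - f x) * hab

lemma norm_le_of_mem_subdiff {M : ℝ} (hM : ∀ y ∈ Metric.closedBall x 1, f y ≤ f x + M)
    {z : EuclideanSpace ℝ (Fin n)} (hz : z ∈ subdiff f x) : ‖z‖ ≤ M := by
  rcases eq_or_ne z 0 with rfl | hz0
  · simpa using hM x (Metric.mem_closedBall_self zero_le_one)
  have hy : x + ‖z‖⁻¹ • z ∈ Metric.closedBall x 1 := by
    rw [Metric.mem_closedBall, dist_eq_norm, add_sub_cancel_left, norm_smul, norm_inv, norm_norm,
      inv_mul_cancel₀ (norm_ne_zero_iff.2 hz0)]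
  have h := hz (x + ‖z‖⁻¹ • z)
  rw [add_sub_cancel_left, real_inner_smul_right, real_inner_self_eq_norm_sq, sq,
    inv_mul_cancel_left₀ (norm_ne_zero_iff.2 hz0)] at h
  linarith [hM _ hy]

lemma ConvexOn.exists_nonneg_bound_subdiff (hf : ConvexOn ℝ univ f)
    (x : EuclideanSpace ℝ (Fin n)) : ∃ M, 0 ≤ M ∧ ∀ z ∈ subdiff f x, ‖z‖ ≤ M := by
  obtain ⟨M, hM⟩ := (isCompact_closedBall x 1).bddAbove_image
    hf.locallyLipschitz.continuous.continuousOn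
  have hM' : ∀ y ∈ Metric.closedBall x 1, f y ≤ f x + |M - f x| := fun y hy => by
    linarith [hM (mem_image_of_mem f hy), le_abs_self (M - f x)]
  exact ⟨|M - f x|, abs_nonneg _, fun z => norm_le_of_mem_subdiff hM'⟩

lemma inner_le_div_norm_of_mem_subdiff {z : EuclideanSpace ℝ (Fin n)} (hz : z ∈ subdiff f x)
    (y : EuclideanSpace ℝ (Fin n)) :
    ⟪z, ‖y - x‖⁻¹ • (y - x)⟫ ≤ (f y - f x) / ‖y - x‖ := by
  rw [real_inner_smul_right, inv_mul_eq_div]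
  exact div_le_div_of_nonneg_right (by linarith [hz y]) (norm_nonneg _)

lemma ConvexOn.exists_mem_subdiff_inner_eq_dirDeriv (hf : ConvexOn ℝ univ f)
    (x v : EuclideanSpace ℝ (Fin n)) : ∃ z ∈ subdiff f x, ⟪z, v⟫ = dirDeriv f x v := by
  obtain ⟨g, hgv, hg⟩ := hf.exists_linearMap_le_dirDeriv x v
  let z := (InnerProductSpace.toDual ℝ _).symm (LinearMap.toContinuousLinearMap g)
  have hz : ∀ u, ⟪z, u⟫ = g u := fun u => InnerProductSpace.toDual_symm_apply
  refine ⟨z, fun y => ?_, (hz v).trans hgv⟩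
  linarith [hz (y - x), hg (y - x), hf.dirDeriv_sub_le x y]

lemma dirDeriv_nonneg_of_mem_normalCone (hx : f x ≤ 0) {w v : EuclideanSpace ℝ (Fin n)}
    (hw : w ∈ normalCone {z | f z ≤ 0} x) (hwv : 0 < ⟪w, v⟫) : 0 ≤ dirDeriv f x v := by
  by_contra! hneg
  obtain ⟨_, ⟨t, ht, rfl⟩, hlt⟩ := exists_lt_of_csInf_lt (nonempty_Ioi.image _) hneg
  simp only [slope_def_field, sub_zero, zero_smul, add_zero] at hlt
  have hft : f (x + t • v) ≤ 0 := by linarith [(div_lt_iff₀ ht).1 hlt]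
  have h := hw _ hft
  rw [add_sub_cancel_left, real_inner_smul_right] at h
  nlinarith [mul_pos ht hwv]

lemma ConvexOn.exists_mem_subdiff_mul_norm_le_inner (hf : ConvexOn ℝ univ f) (hx : f x ≤ 0)
    {γ : ℝ} (hγ : 0 ≤ γ) (hγd : γ < Metric.infDist 0 (subdiff f x))
    {w : EuclideanSpace ℝ (Fin n)} (hw : w ∈ normalCone {z | f z ≤ 0} x) (hw0 : w ≠ 0) :
    ∃ z ∈ subdiff f x, γ * ‖w‖ ≤ ⟪z, w⟫ := by
  have hne : (subdiff f x).Nonempty := nonempty_iff_ne_empty.2 fun h => by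
    rw [h, Metric.infDist_empty] at hγd
    linarith
  obtain ⟨z₀, hz₀, hd, hproj⟩ := exists_norm_eq_infDist_and_norm_sq_le_inner hne
    (isClosed_subdiff f x).isComplete (convex_subdiff f x)
  rw [← hd] at hγd
  have hd0 : 0 < ‖z₀‖ := hγ.trans_lt hγd
  have hw_pos : 0 < ‖w‖ := norm_pos_iff.2 hw0
  set θ := γ * ‖w‖ / ‖z₀‖ ^ 2
  have hθ0 : 0 ≤ θ := by positivity
  have hθd : θ * ‖z₀‖ ^ 2 = γ * ‖w‖ := div_mul_cancel₀ _ (by positivity)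
  have hθw : θ * ‖z₀‖ < ‖w‖ := by nlinarith
  have hwv : 0 < ⟪w, w - θ • z₀⟫ := by
    rw [inner_sub_right, real_inner_smul_right, real_inner_self_eq_norm_sq]
    nlinarith [mul_le_mul_of_nonneg_left (real_inner_le_norm w z₀) hθ0]
  obtain ⟨z, hz, hzv⟩ := hf.exists_mem_subdiff_inner_eq_dirDeriv x (w - θ • z₀)
  refine ⟨z, hz, ?_⟩
  have h := hzv ▸ dirDeriv_nonneg_of_mem_normalCone hx hw hwv
  rw [inner_sub_right, real_inner_smul_right, real_inner_comm z₀] at h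
  linarith [mul_le_mul_of_nonneg_left (hproj z hz) hθ0]

end Euclidean

theorem intermediate_inequality_one_general
    {n : ℕ} (f : EuclideanSpace ℝ (Fin n) → ℝ)
    (hconv : ConvexOn ℝ Set.univ f)
    (xbar : EuclideanSpace ℝ (Fin n)) (hf0 : f xbar = 0)
    (γ₁ : ℝ) (hγ₁ : γ₁ < Metric.infDist 0 (subdiff f xbar)) :
    ∃ ε > (0:ℝ), ∀ x : EuclideanSpace ℝ (Fin n),
      ‖x - xbar‖ < ε → 0 < f x →
      Metric.infDist (‖x - xbar‖⁻¹ • (x - xbar)) (normalCone {z | f z ≤ 0} xbar) < ε →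
      γ₁ ≤ f x / ‖x - xbar‖ := by
  rcases le_or_gt γ₁ 0 with hγ₁0 | hγ₁0
  · exact ⟨1, one_pos, fun x _ hfx _ => hγ₁0.trans (div_nonneg hfx.le (norm_nonneg _))⟩
  obtain ⟨M, hM0, hbound⟩ := hconv.exists_nonneg_bound_subdiff xbar
  obtain ⟨γ, hγ₁γ, hγd⟩ := exists_between hγ₁
  -- `ε` is chosen so that `γ (1 - ε) - M ε = γ₁`.
  obtain ⟨ε, hε0, hε1, hε⟩ : ∃ ε : ℝ, 0 < ε ∧ ε < 1 ∧ ε * (γ + M) = γ - γ₁ :=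
    ⟨(γ - γ₁) / (γ + M), div_pos (by linarith) (by linarith),
      (div_lt_one (by linarith)).2 (by linarith), div_mul_cancel₀ _ (by linarith)⟩
  refine ⟨ε, hε0, fun x _ hfx hdist => ?_⟩
  have hx : x - xbar ≠ 0 := sub_ne_zero.2 fun h => by rw [h, hf0] at hfx; exact hfx.false
  set u := ‖x - xbar‖⁻¹ • (x - xbar)
  have hu : ‖u‖ = 1 := by
    rw [norm_smul, norm_inv, norm_norm, inv_mul_cancel₀ (norm_ne_zero_iff.2 hx)]
  obtain ⟨w, hw, huw⟩ := (Metric.infDist_lt_iff ⟨0, fun _ _ => by rw [inner_zero_left]⟩).1 hdist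
  rw [dist_eq_norm] at huw
  have hw1 : 1 - ‖u - w‖ ≤ ‖w‖ := by linarith [norm_sub_norm_le u w]
  obtain ⟨z, hz, hzw⟩ := hconv.exists_mem_subdiff_mul_norm_le_inner hf0.le (by linarith) hγd hw
    (norm_pos_iff.1 (by linarith))
  have hzuw : |⟪z, u - w⟫| ≤ M * ‖u - w‖ := (abs_real_inner_le_norm z _).trans
    (mul_le_mul_of_nonneg_right (hbound z hz) (norm_nonneg _))
  calc γ₁ ≤ ⟪z, w⟫ + ⟪z, u - w⟫ := by
        linarith [neg_abs_le ⟪z, u - w⟫, mul_le_mul_of_nonneg_left hw1 (hγ₁0.trans hγ₁γ).le,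
          mul_lt_mul_of_pos_right huw (by linarith : 0 < γ + M)]
    _ = ⟪z, u⟫ := by rw [← inner_add_right, add_sub_cancel]
    _ ≤ f x / ‖x - xbar‖ := by
        simpa only [hf0, sub_zero] using inner_le_div_norm_of_mem_subdiff hz x

/-- First intermediate inequality: `f(x)/‖x - x̄‖ ≥ γ₁` for `x` near `x̄` in
(approximately) normal cone directions. -/
theorem intermediate_inequality_one
    {n : ℕ} (f : EuclideanSpace ℝ (Fin n) → ℝ)
    (hconv : ConvexOn ℝ Set.univ f)
    (xbar : EuclideanSpace ℝ (Fin n)) (hf0 : f xbar = 0)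
    (h0 : (0:EuclideanSpace ℝ (Fin n)) ∉ subdiff f xbar)
    (γ₁ : ℝ) (hγ₁ : γ₁ < Metric.infDist 0 (subdiff f xbar)) :
    ∃ ε > (0:ℝ), ∀ x : EuclideanSpace ℝ (Fin n),
      ‖x - xbar‖ < ε → 0 < f x →
      Metric.infDist (‖x - xbar‖⁻¹ • (x - xbar)) (normalCone {z | f z ≤ 0} xbar) < ε →
      γ₁ ≤ f x / ‖x - xbar‖ :=
  intermediate_inequality_one_general f hconv xbar hf0 γ₁ hγ₁
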